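/- Let δ > 0 and let h_δ : [0, 2π) → ℝ be defined by h_δ(θ) = (1/(2π)) · (Γ(1+δ)²/Γ(1+2δ)) · (1 − e^{-iθ})^δ (1 − e^{iθ})^δ (which is real-valued and nonnegative). Then for each integer k ≥ 0, the k-th Fourier coefficient of h_δ equals a_k = (1/(2π)) · (-δ)^{↑k} / (1+δ)^{↑k}. -/

import Mathlib

open Finset Real Complex

/-- Rising factorial (Pochhammer symbol): `x^{↑k} = x(x+1)⋯(x+k-1)`. -/
noncomputable def risingFac (x : ℝ) (k : ℕ) : ℝ := ∏ j ∈ Finset.range k, (x + j)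

/-- The density `h_δ` (as a complex-valued function, it is in fact real and nonnegative):
`h_δ(θ) = (1/(2π)) (Γ(1+δ)²/Γ(1+2δ)) (1-e^{-iθ})^δ (1-e^{iθ})^δ`, principal branch powers. -/
noncomputable def hDens (δ : ℝ) (θ : ℝ) : ℂ :=
  (1 / (2 * Real.pi)) * (Real.Gamma (1 + δ) ^ 2 / Real.Gamma (1 + 2 * δ)) *
    ((1 - Complex.exp (-(Complex.I * θ))) ^ (δ : ℂ)) *
    ((1 - Complex.exp (Complex.I * θ)) ^ (δ : ℂ))

open MeasureTheory intervalIntegral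

/-!
Up to the factor `Γ(1+δ)² / (2π Γ(1+2δ))`, `h_δ(θ) = |1 - e^{iθ}|^{2δ} = (2 - 2 cos θ)^δ`.
Integrating `(2 - 2 cos θ)^δ e^{-imθ} (1 - e^{-iθ})` by parts, using
`2 sin θ (1 - e^{-iθ}) = i (2 - 2 cos θ) (1 + e^{-iθ})`, gives the recurrence
`(δ + m + 1) J(m + 1) = (m - δ) J(m)` for `J(m) = ∫₀^{2π} (2 - 2 cos θ)^δ e^{-imθ} dθ`; the boundary
terms vanish because `(2 - 2 cos θ)^δ` vanishes at `0` and `2π`. Hence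
`J(k) = J(0) (-δ)^{↑k} / (1 + δ)^{↑k}`. The substitution `y = (1 + cos θ) / 2` on `(0, π)` turns
`J(0)` into the Beta integral `2 · 4^δ B(1/2, δ + 1/2)`, which Legendre's duplication formula
evaluates to `2π Γ(1 + 2δ) / Γ(1 + δ)²`.
-/

-- `2 - 2 cos θ = ‖1 - e^{iθ}‖²` is the squared length of the chord from `1` to `e^{iθ}`.
noncomputable def chordPow (δ θ : ℝ) : ℝ := (2 - 2 * Real.cos θ) ^ δ

lemma conj_cpow_mul_cpow {z : ℂ} (hz : z.arg ≠ π) (δ : ℝ) :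
    starRingEnd ℂ z ^ (δ : ℂ) * z ^ (δ : ℂ) = ((normSq z ^ δ : ℝ) : ℂ) := by
  rw [conj_cpow _ _ hz, conj_ofReal, conj_mul', norm_cpow_real, normSq_eq_norm_sq,
    ← ofReal_pow, ← Real.rpow_mul_natCast (norm_nonneg z), ← Real.rpow_natCast_mul (norm_nonneg z),
    mul_comm]

lemma normSq_one_sub_exp_I_mul (θ : ℝ) : normSq (1 - cexp (I * θ)) = 2 - 2 * Real.cos θ := by
  rw [mul_comm, normSq_apply]
  simp only [sub_re, sub_im, one_re, one_im, exp_ofReal_mul_I_re, exp_ofReal_mul_I_im]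
  linear_combination Real.sin_sq_add_cos_sq θ

lemma arg_one_sub_exp_I_mul_ne_pi (θ : ℝ) : (1 - cexp (I * θ)).arg ≠ π := fun h => by
  have hre := (arg_eq_pi_iff.mp h).1
  rw [mul_comm, sub_re, one_re, exp_ofReal_mul_I_re] at hre
  linarith [Real.cos_le_one θ]

lemma one_sub_exp_cpow_mul_one_sub_exp_cpow (δ θ : ℝ) :
    (1 - cexp (-(I * θ))) ^ (δ : ℂ) * (1 - cexp (I * θ)) ^ (δ : ℂ) = chordPow δ θ := by
  have hconj : starRingEnd ℂ (1 - cexp (I * θ)) = 1 - cexp (-(I * θ)) := by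
    rw [map_sub, map_one, ← exp_conj, map_mul, conj_I, conj_ofReal, neg_mul]
  rw [← hconj, conj_cpow_mul_cpow (arg_one_sub_exp_I_mul_ne_pi θ), normSq_one_sub_exp_I_mul,
    chordPow]

lemma hDens_eq (δ θ : ℝ) :
    hDens δ θ = (1 / (2 * π) * (Real.Gamma (1 + δ) ^ 2 / Real.Gamma (1 + 2 * δ)) : ℝ)
      * (chordPow δ θ : ℂ) := by
  rw [hDens, mul_assoc _ ((1 - cexp (-(I * θ))) ^ (δ : ℂ)), one_sub_exp_cpow_mul_one_sub_exp_cpow]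
  push_cast
  ring

lemma integral_Ioo_rpow_mul_one_sub_rpow {a b : ℝ} (ha : 0 < a) (hb : 0 < b) :
    ∫ y in Set.Ioo (0 : ℝ) 1, y ^ (a - 1) * (1 - y) ^ (b - 1)
      = Real.Gamma a * Real.Gamma b / Real.Gamma (a + b) := by
  have hbeta := betaIntegral_eq_Gamma_mul_div a b (by simpa) (by simpa)
  rw [betaIntegral, integral_of_le zero_le_one] at hbeta
  rw [← ofReal_inj, ← integral_Ioc_eq_integral_Ioo, ← integral_complex_ofReal]
  push_cast [← Gamma_ofReal]
  rw [← hbeta]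
  refine setIntegral_congr_fun measurableSet_Ioc fun y hy => ?_
  push_cast [ofReal_cpow hy.1.le, ofReal_cpow (sub_nonneg.mpr hy.2)]
  rfl

lemma image_one_add_cos_div_two_Ioo :
    (fun x => (1 + Real.cos x) / 2) '' Set.Ioo 0 π = Set.Ioo 0 1 := by
  have hcos : Real.cos '' Set.Ioo 0 π = Set.Ioo (-1) 1 := by
    simpa using Real.cosPartialHomeomorph.image_source_eq_target
  have hcomp : (fun x => (1 + Real.cos x) / 2) = (fun y => 2⁻¹ * y + 2⁻¹) ∘ Real.cos := by
    ext x; simp only [Function.comp]; ring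
  rw [hcomp, Set.image_comp, hcos, Set.image_affine_Ioo (by norm_num)]
  norm_num

lemma integral_Ioo_zero_one_eq_integral_Ioo_zero_pi {E : Type*} [NormedAddCommGroup E]
    [NormedSpace ℝ E] (g : ℝ → E) :
    ∫ y in Set.Ioo (0 : ℝ) 1, g y
      = ∫ x in Set.Ioo 0 π, (Real.sin x / 2) • g ((1 + Real.cos x) / 2) := by
  have hderiv (x : ℝ) : HasDerivAt (fun x => (1 + Real.cos x) / 2) (-Real.sin x / 2) x :=
    ((Real.hasDerivAt_cos x).const_add 1).div_const 2
  have hinj : Set.InjOn (fun x => (1 + Real.cos x) / 2) (Set.Ioo 0 π) := fun x hx y hy hxy =>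
    Real.injOn_cos (Set.Ioo_subset_Icc_self hx) (Set.Ioo_subset_Icc_self hy) (by linarith [hxy])
  rw [← image_one_add_cos_div_two_Ioo, integral_image_eq_integral_abs_deriv_smul
    measurableSet_Ioo (fun x _ => (hderiv x).hasDerivWithinAt) hinj]
  refine setIntegral_congr_fun measurableSet_Ioo fun x hx => ?_
  rw [neg_div, abs_neg, abs_of_pos (by linarith [Real.sin_pos_of_pos_of_lt_pi hx.1 hx.2])]

lemma sin_div_two_eq_sqrt_mul_sqrt {x : ℝ} (hx : x ∈ Set.Ioo 0 π) :
    Real.sin x / 2 = √((1 + Real.cos x) / 2) * √((1 - Real.cos x) / 2) := by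
  rw [Real.sin_eq_sqrt_one_sub_cos_sq hx.1.le hx.2.le, ← Real.sqrt_mul
    (by linarith [Real.neg_one_le_cos x]), show (1 + Real.cos x) / 2 * ((1 - Real.cos x) / 2)
      = (1 - Real.cos x ^ 2) / 2 ^ 2 by ring, Real.sqrt_div' _ (by positivity),
    Real.sqrt_sq zero_le_two]

lemma integral_Ioo_one_sub_cos_div_two_rpow {δ : ℝ} (hδ : -(1 / 2) < δ) :
    ∫ x in Set.Ioo 0 π, ((1 - Real.cos x) / 2) ^ δ
      = √π * Real.Gamma (δ + 1 / 2) / Real.Gamma (δ + 1) := by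
  have hbeta := integral_Ioo_rpow_mul_one_sub_rpow (a := 1 / 2) (b := δ + 1 / 2) (by norm_num)
    (by linarith)
  rw [integral_Ioo_zero_one_eq_integral_Ioo_zero_pi, Real.Gamma_one_half_eq] at hbeta
  rw [show δ + 1 = 1 / 2 + (δ + 1 / 2) by ring, ← hbeta]
  refine setIntegral_congr_fun measurableSet_Ioo fun x hx => ?_
  obtain ⟨hcos_gt, hcos_lt⟩ := Real.mapsTo_cos_Ioo hx
  have hp : 0 < (1 + Real.cos x) / 2 := by linarith
  have hq : 0 < (1 - Real.cos x) / 2 := by linarith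
  rw [smul_eq_mul, sin_div_two_eq_sqrt_mul_sqrt hx, Real.sqrt_eq_rpow, Real.sqrt_eq_rpow,
    show 1 - (1 + Real.cos x) / 2 = (1 - Real.cos x) / 2 by ring]
  calc ((1 - Real.cos x) / 2) ^ δ
      = ((1 + Real.cos x) / 2) ^ (1 / 2 + (1 / 2 - 1) : ℝ)
          * ((1 - Real.cos x) / 2) ^ (1 / 2 + (δ + 1 / 2 - 1)) := by ring_nf; simp
    _ = _ := by rw [Real.rpow_add hp, Real.rpow_add hq]; ring

lemma continuous_chordPow {δ : ℝ} (hδ : 0 ≤ δ) : Continuous (chordPow δ) :=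
  (continuous_const.sub (continuous_const.mul Real.continuous_cos)).rpow_const fun _ => Or.inr hδ

lemma chordPow_two_pi_sub (δ θ : ℝ) : chordPow δ (2 * π - θ) = chordPow δ θ := by
  rw [chordPow, chordPow, Real.cos_two_pi_sub]

lemma integral_chordPow {δ : ℝ} (hδ : 0 ≤ δ) :
    ∫ θ in (0 : ℝ)..2 * π, chordPow δ θ
      = 2 * π * (Real.Gamma (1 + 2 * δ) / Real.Gamma (1 + δ) ^ 2) := by
  have hint (a b : ℝ) : IntervalIntegrable (chordPow δ) volume a b :=
    (continuous_chordPow hδ).intervalIntegrable a b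
  have hsymm : ∫ θ in π..2 * π, chordPow δ θ = ∫ θ in (0 : ℝ)..π, chordPow δ θ := by
    have h := integral_comp_sub_left (a := 0) (b := π) (chordPow δ) (2 * π)
    simp only [chordPow_two_pi_sub, sub_zero, show 2 * π - π = π by ring] at h
    exact h.symm
  have hhalf : ∫ θ in (0 : ℝ)..π, chordPow δ θ
      = 4 ^ δ * ∫ x in Set.Ioo 0 π, ((1 - Real.cos x) / 2) ^ δ := by
    rw [integral_of_le pi_pos.le, integral_Ioc_eq_integral_Ioo, ← MeasureTheory.integral_const_mul]
    refine setIntegral_congr_fun measurableSet_Ioo fun x _ => ?_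
    rw [chordPow, ← Real.mul_rpow (by norm_num) (by linarith [Real.cos_le_one x])]
    ring_nf
  have hdup := Real.Gamma_mul_Gamma_add_half (δ + 1 / 2)
  rw [show δ + 1 / 2 + 1 / 2 = 1 + δ by ring, show 2 * (δ + 1 / 2) = 1 + 2 * δ by ring] at hdup
  have hsq : √π * √π = π := Real.mul_self_sqrt pi_pos.le
  have hpow : (4 : ℝ) ^ δ * 2 ^ (1 - (1 + 2 * δ)) = 1 := by
    rw [show 1 - (1 + 2 * δ) = -(2 * δ) by ring, Real.rpow_neg zero_le_two,
      Real.rpow_mul zero_le_two]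
    norm_num
    exact mul_inv_cancel₀ (by positivity)
  have hlegendre : 4 ^ δ * (√π * Real.Gamma (δ + 1 / 2)) * Real.Gamma (1 + δ)
      = π * Real.Gamma (1 + 2 * δ) := by
    linear_combination (4 ^ δ * √π) * hdup + (Real.Gamma (1 + 2 * δ) * (√π * √π)) * hpow
      + Real.Gamma (1 + 2 * δ) * hsq
  have hhalf_value : 4 ^ δ * (√π * Real.Gamma (δ + 1 / 2) / Real.Gamma (1 + δ))
      = π * Real.Gamma (1 + 2 * δ) / Real.Gamma (1 + δ) ^ 2 := by
    have hΓ : Real.Gamma (1 + δ) ≠ 0 := (Real.Gamma_pos_of_pos (by linarith)).ne'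
    rw [eq_div_iff (by positivity), ← hlegendre]
    field_simp
  rw [← integral_add_adjacent_intervals (hint 0 π) (hint π (2 * π)), hsymm, hhalf,
    integral_Ioo_one_sub_cos_div_two_rpow (by linarith), add_comm δ 1, hhalf_value]
  ring

noncomputable def chordPowMoment (δ : ℝ) (m : ℂ) : ℂ :=
  ∫ θ in (0 : ℝ)..2 * π, (chordPow δ θ : ℂ) * cexp (-(I * m * θ))

lemma two_sin_mul_one_sub_exp (θ : ℝ) :
    2 * (Real.sin θ : ℂ) * (1 - cexp (-(I * θ)))
      = I * (2 - 2 * (Real.cos θ : ℂ)) * (1 + cexp (-(I * θ))) := by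
  have h : (Real.sin θ : ℂ) ^ 2 + (Real.cos θ : ℂ) ^ 2 = 1 := by
    exact_mod_cast Real.sin_sq_add_cos_sq θ
  rw [show -(I * θ) = ((-θ : ℝ) : ℂ) * I by push_cast; ring, exp_mul_I, ← ofReal_cos,
    ← ofReal_sin, Real.cos_neg, Real.sin_neg, ofReal_neg]
  linear_combination (2 * I) * h + (2 * (Real.sin θ : ℂ) - 2 * Real.sin θ * Real.cos θ) * I_sq

lemma hasDerivAt_chordPow (δ : ℝ) {θ : ℝ} (hθ : Real.cos θ ≠ 1) :
    HasDerivAt (chordPow δ) (δ * (2 - 2 * Real.cos θ) ^ (δ - 1) * (2 * Real.sin θ)) θ := by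
  have hbase : HasDerivAt (fun t => 2 - 2 * Real.cos t) (2 * Real.sin θ) θ := by
    simpa using ((Real.hasDerivAt_cos θ).const_mul 2).const_sub 2
  exact (Real.hasDerivAt_rpow_const (Or.inl (by contrapose! hθ; linarith))).comp θ hbase

lemma hasDerivAt_exp_neg_I_mul (c : ℂ) (θ : ℝ) :
    HasDerivAt (fun t : ℝ => cexp (-(I * c * t))) (-(I * c) * cexp (-(I * c * θ))) θ := by
  simpa [mul_comm] using (((hasDerivAt_id (θ : ℂ)).const_mul (-(I * c))).cexp).comp_ofReal

lemma hasDerivAt_chordPow_mul_exp_sub_exp (δ : ℝ) (m : ℂ) {θ : ℝ} (hθ : Real.cos θ ≠ 1) :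
    HasDerivAt (fun t : ℝ => (chordPow δ t : ℂ) * (cexp (-(I * m * t)) - cexp (-(I * (m + 1) * t))))
      (I * (δ - m) * (chordPow δ θ * cexp (-(I * m * θ)))
        + I * (δ + m + 1) * (chordPow δ θ * cexp (-(I * (m + 1) * θ)))) θ := by
  have hpos : 0 < 2 - 2 * Real.cos θ := by
    linarith [lt_of_le_of_ne (Real.cos_le_one θ) hθ]
  have hchord : chordPow δ θ = (2 - 2 * Real.cos θ) ^ (δ - 1) * (2 - 2 * Real.cos θ) := by
    rw [chordPow, ← Real.rpow_add_one hpos.ne', sub_add_cancel]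
  have hshift : cexp (-(I * (m + 1) * θ)) = cexp (-(I * m * θ)) * cexp (-(I * θ)) := by
    rw [← Complex.exp_add]; ring_nf
  refine ((hasDerivAt_chordPow δ hθ).ofReal_comp.mul
    ((hasDerivAt_exp_neg_I_mul m θ).sub (hasDerivAt_exp_neg_I_mul (m + 1) θ))).congr_deriv ?_
  simp only [Pi.sub_apply]
  rw [hshift, hchord]
  simp only [ofReal_mul, ofReal_sub, ofReal_ofNat]
  linear_combination (δ * ((2 - 2 * Real.cos θ) ^ (δ - 1) : ℝ) * cexp (-(I * m * θ)))
    * two_sin_mul_one_sub_exp θ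

lemma cos_ne_one_of_mem_Ioo {θ : ℝ} (hθ : θ ∈ Set.Ioo 0 (2 * π)) : Real.cos θ ≠ 1 := fun h =>
  hθ.1.ne' ((Real.cos_eq_one_iff_of_lt_of_lt (by linarith [hθ.1, pi_pos]) hθ.2).mp h)

lemma chordPowMoment_add_one {δ : ℝ} (hδ : 0 < δ) (m : ℂ) :
    (δ + m + 1) * chordPowMoment δ (m + 1) = (m - δ) * chordPowMoment δ m := by
  have hchord : Continuous fun t : ℝ => (chordPow δ t : ℂ) :=
    continuous_ofReal.comp (continuous_chordPow hδ.le)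
  have hint (c : ℂ) : IntervalIntegrable (fun t : ℝ => (chordPow δ t : ℂ) * cexp (-(I * c * t)))
      volume 0 (2 * π) :=
    (hchord.mul (by fun_prop)).intervalIntegrable 0 (2 * π)
  have hftc := integral_eq_sub_of_hasDerivAt_of_le two_pi_pos.le
    (hchord.mul (by fun_prop)).continuousOn
    (fun θ hθ => hasDerivAt_chordPow_mul_exp_sub_exp δ m (cos_ne_one_of_mem_Ioo hθ))
    (((hint m).const_mul _).add ((hint (m + 1)).const_mul _))
  rw [integral_add ((hint m).const_mul _) ((hint (m + 1)).const_mul _),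
    intervalIntegral.integral_const_mul, intervalIntegral.integral_const_mul] at hftc
  have hvanish : chordPow δ 0 = 0 := by simp [chordPow, Real.zero_rpow hδ.ne']
  have hvanish' : chordPow δ (2 * π) = 0 := by
    rw [← sub_zero (2 * π), chordPow_two_pi_sub, hvanish]
  simp only [Pi.mul_apply, hvanish, hvanish', ofReal_zero, zero_mul,
    sub_self] at hftc
  unfold chordPowMoment
  apply mul_left_cancel₀ I_ne_zero
  linear_combination hftc

lemma risingFac_succ (x : ℝ) (k : ℕ) : risingFac x (k + 1) = risingFac x k * (x + k) :=
  prod_range_succ _ _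

lemma risingFac_pos {x : ℝ} (hx : 0 < x) (k : ℕ) : 0 < risingFac x k :=
  prod_pos fun _ _ => by positivity

lemma chordPowMoment_zero {δ : ℝ} (hδ : 0 ≤ δ) :
    chordPowMoment δ 0 = (2 * π * (Real.Gamma (1 + 2 * δ) / Real.Gamma (1 + δ) ^ 2) : ℝ) := by
  simp only [chordPowMoment, mul_zero, zero_mul, neg_zero, Complex.exp_zero, mul_one]
  rw [intervalIntegral.integral_ofReal, integral_chordPow hδ]

lemma chordPowMoment_natCast {δ : ℝ} (hδ : 0 < δ) (k : ℕ) :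
    chordPowMoment δ k = (2 * π * (Real.Gamma (1 + 2 * δ) / Real.Gamma (1 + δ) ^ 2)
      * (risingFac (-δ) k / risingFac (1 + δ) k) : ℝ) := by
  induction k with
  | zero => simp [risingFac, chordPowMoment_zero hδ.le]
  | succ k ih =>
    have hne : (δ : ℂ) + k + 1 ≠ 0 := by exact_mod_cast (by positivity : (0 : ℝ) < δ + k + 1).ne'
    have hrec := chordPowMoment_add_one hδ k
    have hR := (risingFac_pos (by linarith : 0 < 1 + δ) k).ne'
    rw [ih] at hrec
    rw [Nat.cast_succ]
    apply mul_left_cancel₀ hne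
    rw [hrec, risingFac_succ, risingFac_succ,
      show (δ : ℂ) + k + 1 = (δ + k + 1 : ℝ) by push_cast; ring,
      show (k : ℂ) - δ = (k - δ : ℝ) by push_cast; ring, ← ofReal_mul, ← ofReal_mul, ofReal_inj]
    have hlast : 1 + δ + k ≠ 0 := by positivity
    field_simp
    ring

theorem stmt3 (δ : ℝ) (hδ : 0 < δ) (k : ℕ) :
    (1 / (2 * Real.pi)) *
        ∫ θ in (0 : ℝ)..(2 * Real.pi), hDens δ θ * Complex.exp (-(Complex.I * k * θ))
      = ((1 / (2 * Real.pi)) * (risingFac (-δ) k / risingFac (1 + δ) k) : ℝ) := by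
  have hmoment := chordPowMoment_natCast hδ k
  unfold chordPowMoment at hmoment
  simp only [hDens_eq, mul_assoc _ _ (cexp _), intervalIntegral.integral_const_mul]
  rw [hmoment, show 1 / (2 * (π : ℂ)) = (1 / (2 * π) : ℝ) by push_cast; rfl, ← ofReal_mul,
    ← ofReal_mul, ofReal_inj]
  have hΓ : Real.Gamma (1 + 2 * δ) ≠ 0 := (Real.Gamma_pos_of_pos (by linarith)).ne'
  have hΓ' : Real.Gamma (1 + δ) ≠ 0 := (Real.Gamma_pos_of_pos (by linarith)).ne'
  field_simp
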